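/- Let p : 𝔻 → [1,∞) be a measurable variable exponent with 1 < ess inf_{z∈𝔻} p(z) and ess sup_{z∈𝔻} p(z) < ∞, and suppose there is a constant C > 0 such that ∫_𝔻 |Pf(z)|^{p(z)} dA(z) ≤ C ∫_𝔻 |f(z)|^{p(z)} dA(z) for every measurable f : 𝔻 → ℂ with ∫_𝔻 |f(z)|^{p(z)} dA(z) < ∞. Then for every τ ∈ 𝔻 there exist a compact set K ⊆ 𝔻 that is a neighborhood of τ and a constant c ∈ ℝ such that p(z) = c for almost every z ∈ K. -/

import Mathlib

/-
Near any τ ∈ 𝔻 the Bergman kernel (1 - w̄z)⁻² has real part at least some κ > 0 for z, w in a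
small closed disc K around τ. Suppose p < a on E₁ ⊆ K and p > b on E₂ ⊆ K, both of positive
measure. For f = t·1_{E₁} we get |Pf| ≥ tκ|E₁| on E₂, so the modular inequality yields
(tκ|E₁|)^b |E₂| ≤ C t^a |E₁| for all large t, which is impossible when a < b. Hence for every
a < b, either p ≥ a a.e. on K or p ≤ b a.e. on K, and this forces p to be a.e. constant on K.
-/

open MeasureTheory Complex Set

noncomputable section

/-- The open unit disc in the complex plane. -/
def unitDisc : Set ℂ := {z : ℂ | ‖z‖ < 1}

/-- The normalized Lebesgue area measure on `ℂ` (Lebesgue measure divided by `π`). -/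
def areaD : Measure ℂ := (ENNReal.ofReal Real.pi)⁻¹ • volume

/-- The Bergman projection on the unit disc. -/
def bergmanP (f : ℂ → ℂ) (z : ℂ) : ℂ :=
  ∫ w in unitDisc, f w / (1 - (starRingEnd ℂ) w * z) ^ 2 ∂areaD

open Filter Topology
open scoped ENNReal

theorem exists_ae_eq_const_of_ae_le_or_ae_le {α : Type*} [MeasurableSpace α] {ν : Measure α}
    [NeZero ν] {p : α → ℝ}
    (h : ∀ a b : ℝ, a < b → (∀ᵐ x ∂ν, a ≤ p x) ∨ ∀ᵐ x ∂ν, p x ≤ b) :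
    ∃ c : ℝ, ∀ᵐ x ∂ν, p x = c := by
  have not_ae_false : ¬ ∀ᵐ _ ∂ν, False := by simp [NeZero.ne ν]
  obtain ⟨a₀, ha₀⟩ : ∃ a : ℕ, ¬ ∀ᵐ x ∂ν, (a : ℝ) ≤ p x := by
    by_contra! hall
    refine not_ae_false ((ae_all_iff.2 hall).mono fun x hx => ?_)
    obtain ⟨n, hn⟩ := exists_nat_gt (p x)
    exact (hx n).not_gt hn
  obtain ⟨b₀, hb₀⟩ : ∃ b : ℕ, ¬ ∀ᵐ x ∂ν, p x ≤ -(b : ℝ) := by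
    by_contra! hall
    refine not_ae_false ((ae_all_iff.2 hall).mono fun x hx => ?_)
    obtain ⟨n, hn⟩ := exists_nat_gt (-p x)
    linarith [hx n]
  set S := {a : ℝ | ∀ᵐ x ∂ν, a ≤ p x}
  have hS : S.Nonempty :=
    ⟨-b₀ - 1, ((h _ _ (by linarith)).resolve_right hb₀)⟩
  have hSbdd : BddAbove S := ⟨a₀, fun s hs => not_lt.1 fun hlt =>
    ha₀ (Eventually.mono (show s ∈ S from hs) fun x hx => hlt.le.trans hx)⟩
  refine ⟨sSup S, ?_⟩
  have hlow : ∀ᵐ x ∂ν, ∀ q : ℚ, (q : ℝ) < sSup S → (q : ℝ) ≤ p x := by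
    refine ae_all_iff.2 fun q => ?_
    by_cases hq : (q : ℝ) < sSup S
    · obtain ⟨s, hs, hqs⟩ := exists_lt_of_lt_csSup hS hq
      exact (show ∀ᵐ x ∂ν, s ≤ p x from hs).mono fun x hx _ => hqs.le.trans hx
    · exact ae_of_all _ fun x h => absurd h hq
  have hup : ∀ᵐ x ∂ν, ∀ q : ℚ, sSup S < q → p x ≤ q := by
    refine ae_all_iff.2 fun q => ?_
    by_cases hq : sSup S < q
    · obtain ⟨a, hca, haq⟩ := exists_between hq
      exact ((h a q haq).resolve_left (notMem_of_csSup_lt hca hSbdd : a ∉ S)).mono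
        fun x hx _ => hx
    · exact ae_of_all _ fun x h => absurd h hq
  filter_upwards [hlow, hup] with x hxl hxu
  exact le_antisymm (le_of_forall_lt_rat_imp_le hxu) (le_of_forall_rat_lt_imp_le hxl)

theorem eventually_mul_rpow_lt_mul_rpow {a b A : ℝ} (hab : a < b) (hA : 0 < A) (B : ℝ) :
    ∀ᶠ t in atTop, B * t ^ a < A * t ^ b := by
  filter_upwards [(tendsto_rpow_atTop (sub_pos.2 hab)).eventually_gt_atTop (B / A),
    eventually_gt_atTop 0] with t ht ht0
  calc B * t ^ a < A * t ^ (b - a) * t ^ a := by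
        gcongr
        exact (div_lt_iff₀' hA).1 ht
    _ = A * t ^ b := by rw [mul_assoc, ← Real.rpow_add ht0, sub_add_cancel]

theorem mul_measureReal_le_norm_setIntegral_of_le_re {α : Type*} [MeasurableSpace α]
    {μ : Measure α} {E : Set α} (hE : MeasurableSet E) (hμE : μ E ≠ ⊤) {g : α → ℂ}
    (hg : IntegrableOn g E μ) {κ : ℝ} (hκ : ∀ w ∈ E, κ ≤ (g w).re) :
    κ * μ.real E ≤ ‖∫ w in E, g w ∂μ‖ :=
  calc κ * μ.real E = ∫ _ in E, κ ∂μ := by rw [setIntegral_const, smul_eq_mul, mul_comm]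
    _ ≤ ∫ w in E, (g w).re ∂μ := setIntegral_mono_on (integrableOn_const hμE) hg.re hE hκ
    _ = (∫ w in E, g w ∂μ).re := integral_re hg
    _ ≤ ‖∫ w in E, g w ∂μ‖ := re_le_norm _

theorem setLIntegral_rpow_indicator_le {α : Type*} [MeasurableSpace α] {μ : Measure α}
    {p : α → ℝ} {S E : Set α} (hS : MeasurableSet S) (hE : MeasurableSet E)
    (hp : ∀ z ∈ S, p z ≠ 0) {a t : ℝ} (ht : 1 ≤ t) (hpa : ∀ z ∈ E, p z ≤ a) :
    ∫⁻ z in S, ENNReal.ofReal (‖E.indicator (fun _ => (t : ℂ)) z‖ ^ p z) ∂μ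
      ≤ ENNReal.ofReal (t ^ a) * μ E :=
  calc ∫⁻ z in S, ENNReal.ofReal (‖E.indicator (fun _ => (t : ℂ)) z‖ ^ p z) ∂μ
      ≤ ∫⁻ z in S, E.indicator (fun _ => ENNReal.ofReal (t ^ a)) z ∂μ := by
        refine setLIntegral_mono' hS fun z hz => ?_
        by_cases hzE : z ∈ E
        · simp only [indicator_of_mem hzE, norm_real, Real.norm_of_nonneg (zero_le_one.trans ht)]
          exact ENNReal.ofReal_le_ofReal (Real.rpow_le_rpow_of_exponent_le ht (hpa z hzE))
        · simp [indicator_of_notMem hzE, Real.zero_rpow (hp z hz)]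
    _ ≤ ∫⁻ z, E.indicator (fun _ => ENNReal.ofReal (t ^ a)) z ∂μ := setLIntegral_le_lintegral _ _
    _ = ENNReal.ofReal (t ^ a) * μ E := lintegral_indicator_const hE _

def bergmanKernel (z w : ℂ) : ℂ := ((1 - starRingEnd ℂ w * z) ^ 2)⁻¹

theorem bergmanP_eq_integral_mul_bergmanKernel (f : ℂ → ℂ) (z : ℂ) :
    bergmanP f z = ∫ w in unitDisc, f w * bergmanKernel z w ∂areaD := rfl

def diskModular (p : ℂ → ℝ) (f : ℂ → ℂ) : ℝ≥0∞ :=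
  ∫⁻ z in unitDisc, ENNReal.ofReal (‖f z‖ ^ p z) ∂areaD

def BergmanModularBound (p : ℂ → ℝ) (C : ℝ) : Prop :=
  ∀ f : ℂ → ℂ, Measurable f → diskModular p f < ⊤ →
    diskModular p (bergmanP f) ≤ ENNReal.ofReal C * diskModular p f

theorem isOpen_unitDisc : IsOpen unitDisc := by
  simpa [unitDisc, Metric.ball, dist_zero_right] using (Metric.isOpen_ball (x := (0 : ℂ)) (ε := 1))

theorem measurableSet_unitDisc : MeasurableSet unitDisc := isOpen_unitDisc.measurableSet

instance : IsFiniteMeasureOnCompacts areaD :=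
  IsFiniteMeasureOnCompacts.smul _ (ENNReal.inv_ne_top.2 (by simp [Real.pi_pos]))

instance : areaD.IsOpenPosMeasure :=
  Measure.isOpenPosMeasure_smul _ (by simp)

theorem exists_isCompact_re_bergmanKernel_ge {τ : ℂ} (hτ : τ ∈ unitDisc) :
    ∃ K ⊆ unitDisc, IsCompact K ∧ τ ∈ interior K ∧
      ∃ κ > 0, ∀ z ∈ K, ∀ w ∈ K, κ ≤ (bergmanKernel z w).re := by
  have hτ2 : 0 < 1 - ‖τ‖ ^ 2 := by
    have : ‖τ‖ < 1 := hτ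
    nlinarith [norm_nonneg τ]
  have hdiag : bergmanKernel τ τ = (((1 - ‖τ‖ ^ 2) ^ 2)⁻¹ : ℝ) := by
    simp [bergmanKernel, Complex.conj_mul']
  have hpos : 0 < (bergmanKernel τ τ).re := by rw [hdiag, ofReal_re]; positivity
  have hne : (1 - starRingEnd ℂ τ * τ) ^ 2 ≠ 0 := fun h => by simp [bergmanKernel, h] at hpos
  have hcont : ContinuousAt (fun q : ℂ × ℂ => (bergmanKernel q.1 q.2).re) (τ, τ) :=
    Complex.continuous_re.continuousAt.comp (ContinuousAt.inv₀ (by fun_prop) hne)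
  obtain ⟨U, hU, hκ⟩ := eventually_prod_self_iff'.1 <| (nhds_prod_eq (x := τ) (y := τ)) ▸
    hcont.eventually (lt_mem_nhds (half_lt_self hpos))
  obtain ⟨r, hr, hrU⟩ := Metric.nhds_basis_closedBall.mem_iff.1
    (inter_mem hU (isOpen_unitDisc.mem_nhds hτ))
  refine ⟨Metric.closedBall τ r, hrU.trans inter_subset_right, isCompact_closedBall τ r,
    mem_interior_iff_mem_nhds.2 (Metric.closedBall_mem_nhds τ hr), _, half_pos hpos,
    fun z hz w hw => (hκ z (hrU hz).1 w (hrU hw).1).le⟩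

theorem mul_measureReal_le_norm_bergmanP_indicator {K : Set ℂ} (hKd : K ⊆ unitDisc)
    (hK : IsCompact K) {κ : ℝ} (hκ : 0 < κ)
    (hker : ∀ z ∈ K, ∀ w ∈ K, κ ≤ (bergmanKernel z w).re) {E : Set ℂ} (hE : MeasurableSet E)
    (hEK : E ⊆ K) {t : ℝ} (ht : 0 ≤ t) {z : ℂ} (hz : z ∈ K) :
    t * κ * areaD.real E ≤ ‖bergmanP (E.indicator fun _ => (t : ℂ)) z‖ := by
  have hrepr : bergmanP (E.indicator fun _ => (t : ℂ)) z
      = ∫ w in E, t * bergmanKernel z w ∂areaD := by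
    simp_rw [bergmanP_eq_integral_mul_bergmanKernel, ← indicator_mul_left]
    rw [setIntegral_indicator hE, inter_eq_self_of_subset_right (hEK.trans hKd)]
  have hcont : ContinuousOn (bergmanKernel z) K := by
    refine ContinuousOn.inv₀ (by fun_prop) fun w hw h => ?_
    have := hker z hz w hw
    simp [bergmanKernel, h] at this
    linarith
  rw [hrepr]
  refine mul_measureReal_le_norm_setIntegral_of_le_re hE
    (measure_ne_top_of_subset hEK hK.measure_lt_top.ne)
    ((hcont.integrableOn_compact hK).mono_set hEK |>.const_mul _) fun w hw => ?_
  rw [re_ofReal_mul]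
  exact mul_le_mul_of_nonneg_left (hker z hz w (hEK hw)) ht

theorem ofReal_rpow_mul_le_diskModular_bergmanP_indicator {K : Set ℂ} (hKd : K ⊆ unitDisc)
    (hK : IsCompact K) {κ : ℝ} (hκ : 0 < κ)
    (hker : ∀ z ∈ K, ∀ w ∈ K, κ ≤ (bergmanKernel z w).re) {p : ℂ → ℝ} {E₁ E₂ : Set ℂ}
    (hE₁ : MeasurableSet E₁) (hE₁K : E₁ ⊆ K) (hE₂ : MeasurableSet E₂) (hE₂K : E₂ ⊆ K) {b : ℝ}
    (hpb : ∀ z ∈ E₂, b ≤ p z) (hp : ∀ z ∈ E₂, 0 ≤ p z) {t : ℝ} (ht : 0 ≤ t)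
    (htκ : 1 ≤ t * κ * areaD.real E₁) :
    ENNReal.ofReal ((t * κ * areaD.real E₁) ^ b) * areaD E₂
      ≤ diskModular p (bergmanP (E₁.indicator fun _ => (t : ℂ))) :=
  calc ENNReal.ofReal ((t * κ * areaD.real E₁) ^ b) * areaD E₂
      = ∫⁻ _ in E₂, ENNReal.ofReal ((t * κ * areaD.real E₁) ^ b) ∂areaD :=
        (setLIntegral_const _ _).symm
    _ ≤ ∫⁻ z in E₂, ENNReal.ofReal (‖bergmanP (E₁.indicator fun _ => (t : ℂ)) z‖ ^ p z)
          ∂areaD := by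
        refine setLIntegral_mono' hE₂ fun z hz => ENNReal.ofReal_le_ofReal ?_
        calc (t * κ * areaD.real E₁) ^ b ≤ (t * κ * areaD.real E₁) ^ p z :=
              Real.rpow_le_rpow_of_exponent_le htκ (hpb z hz)
          _ ≤ _ := Real.rpow_le_rpow (by positivity)
              (mul_measureReal_le_norm_bergmanP_indicator hKd hK hκ hker hE₁ hE₁K ht (hE₂K hz))
              (hp z hz)
    _ ≤ _ := lintegral_mono_set (hE₂K.trans hKd)

theorem rpow_mul_measureReal_le_of_bergmanModularBound {p : ℂ → ℝ} {C : ℝ}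
    (hmod : BergmanModularBound p C) (hp1 : ∀ z ∈ unitDisc, 1 ≤ p z) {K : Set ℂ}
    (hKd : K ⊆ unitDisc) (hK : IsCompact K) {κ : ℝ} (hκ : 0 < κ)
    (hker : ∀ z ∈ K, ∀ w ∈ K, κ ≤ (bergmanKernel z w).re) {E₁ E₂ : Set ℂ}
    (hE₁ : MeasurableSet E₁) (hE₁K : E₁ ⊆ K) (hE₂ : MeasurableSet E₂) (hE₂K : E₂ ⊆ K)
    (hE₂pos : 0 < areaD.real E₂) {a b : ℝ} (hpa : ∀ z ∈ E₁, p z ≤ a)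
    (hpb : ∀ z ∈ E₂, b ≤ p z) {t : ℝ} (ht : 1 ≤ t) (htκ : 1 ≤ t * κ * areaD.real E₁) :
    (t * κ * areaD.real E₁) ^ b * areaD.real E₂ ≤ C * (t ^ a * areaD.real E₁) := by
  have hE₁fin : areaD E₁ ≠ ⊤ := measure_ne_top_of_subset hE₁K hK.measure_lt_top.ne
  have hE₂fin : areaD E₂ ≠ ⊤ := measure_ne_top_of_subset hE₂K hK.measure_lt_top.ne
  have hf : diskModular p (E₁.indicator fun _ => (t : ℂ)) ≤ ENNReal.ofReal (t ^ a) * areaD E₁ :=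
    setLIntegral_rpow_indicator_le measurableSet_unitDisc hE₁
      (fun z hz => (zero_lt_one.trans_le (hp1 z hz)).ne') ht hpa
  have hPf := ofReal_rpow_mul_le_diskModular_bergmanP_indicator hKd hK hκ hker hE₁ hE₁K
    hE₂ hE₂K hpb (fun z hz => zero_le_one.trans (hp1 z (hKd (hE₂K hz))))
    (zero_le_one.trans ht) htκ
  have hchain := hPf.trans <| (hmod _ (measurable_const.indicator hE₁)
    (hf.trans_lt (ENNReal.mul_lt_top ENNReal.ofReal_lt_top hE₁fin.lt_top))).trans
    (mul_le_mul_right hf _)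
  rw [← ofReal_measureReal hE₁fin, ← ofReal_measureReal hE₂fin, ← ENNReal.ofReal_mul
    (by positivity), ← ENNReal.ofReal_mul' (by positivity), ← ENNReal.ofReal_mul'
    (by positivity)] at hchain
  exact (ENNReal.ofReal_le_ofReal_iff'.1 hchain).resolve_right (not_le.2 (by positivity))

theorem ae_le_or_ae_le_of_bergmanModularBound {p : ℂ → ℝ} (hpm : Measurable p) {C : ℝ}
    (hmod : BergmanModularBound p C) (hp1 : ∀ z ∈ unitDisc, 1 ≤ p z) {K : Set ℂ}
    (hKd : K ⊆ unitDisc) (hK : IsCompact K) {κ : ℝ} (hκ : 0 < κ)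
    (hker : ∀ z ∈ K, ∀ w ∈ K, κ ≤ (bergmanKernel z w).re) {a b : ℝ} (hab : a < b) :
    (∀ᵐ z ∂areaD.restrict K, a ≤ p z) ∨ ∀ᵐ z ∂areaD.restrict K, p z ≤ b := by
  have hKm : MeasurableSet K := hK.isClosed.measurableSet
  set E₁ := {z | p z < a} ∩ K
  set E₂ := {z | b < p z} ∩ K
  simp only [ae_iff, not_le, Measure.restrict_apply (measurableSet_lt hpm measurable_const),
    Measure.restrict_apply (measurableSet_lt measurable_const hpm)]
  by_contra! hpos
  have hm₁ : 0 < areaD.real E₁ := ENNReal.toReal_pos hpos.1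
    (measure_ne_top_of_subset inter_subset_right hK.measure_lt_top.ne)
  have hm₂ : 0 < areaD.real E₂ := ENNReal.toReal_pos hpos.2
    (measure_ne_top_of_subset inter_subset_right hK.measure_lt_top.ne)
  obtain ⟨t, ht, htκ, hlt⟩ := ((eventually_ge_atTop 1).and
    (((tendsto_id.atTop_mul_const (mul_pos hκ hm₁)).eventually_ge_atTop 1).and
    (eventually_mul_rpow_lt_mul_rpow hab (A := (κ * areaD.real E₁) ^ b * areaD.real E₂)
      (by positivity) (C * areaD.real E₁)))).exists
  have hle := rpow_mul_measureReal_le_of_bergmanModularBound hmod hp1 hKd hK hκ hker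
    ((measurableSet_lt hpm measurable_const).inter hKm) inter_subset_right
    ((measurableSet_lt measurable_const hpm).inter hKm) inter_subset_right hm₂
    (fun z hz => hz.1.le) (fun z hz => hz.1.le) ht (by simpa [mul_assoc] using htκ)
  rw [mul_assoc t, Real.mul_rpow (by positivity) (by positivity)] at hle
  linarith

theorem modular_inequality_bergman_implies_locally_constant_exponent_general
    (p : ℂ → ℝ) (hpm : Measurable p)
    (hp1 : ∀ z ∈ unitDisc, 1 ≤ p z)
    (C : ℝ)
    (hmod : ∀ f : ℂ → ℂ, Measurable f →
      (∫⁻ z in unitDisc, ENNReal.ofReal (‖f z‖ ^ p z) ∂areaD) < ⊤ →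
      (∫⁻ z in unitDisc, ENNReal.ofReal (‖bergmanP f z‖ ^ p z) ∂areaD)
        ≤ ENNReal.ofReal C *
          ∫⁻ z in unitDisc, ENNReal.ofReal (‖f z‖ ^ p z) ∂areaD) :
    ∀ τ ∈ unitDisc, ∃ K : Set ℂ, K ⊆ unitDisc ∧ IsCompact K ∧ τ ∈ interior K ∧
      ∃ c : ℝ, ∀ᵐ z ∂(areaD.restrict K), p z = c := by
  intro τ hτ
  obtain ⟨K, hKd, hK, hτK, κ, hκ, hker⟩ := exists_isCompact_re_bergmanKernel_ge hτ
  refine ⟨K, hKd, hK, hτK, ?_⟩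
  have : NeZero (areaD.restrict K) := ⟨by
    simpa [Measure.restrict_eq_zero] using
      (Measure.measure_pos_of_nonempty_interior _ ⟨τ, hτK⟩).ne'⟩
  exact exists_ae_eq_const_of_ae_le_or_ae_le fun a b hab =>
    ae_le_or_ae_le_of_bergmanModularBound hpm hmod hp1 hKd hK hκ hker hab

theorem modular_inequality_bergman_implies_locally_constant_exponent
    (p : ℂ → ℝ) (hpm : Measurable p)
    (hp1 : ∀ z ∈ unitDisc, 1 ≤ p z)
    (hinf : 1 < essInf p (areaD.restrict unitDisc))
    (hsup : ∃ M : ℝ, ∀ᵐ z ∂(areaD.restrict unitDisc), p z ≤ M)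
    (C : ℝ) (hC : 0 < C)
    (hmod : ∀ f : ℂ → ℂ, Measurable f →
      (∫⁻ z in unitDisc, ENNReal.ofReal (‖f z‖ ^ p z) ∂areaD) < ⊤ →
      (∫⁻ z in unitDisc, ENNReal.ofReal (‖bergmanP f z‖ ^ p z) ∂areaD)
        ≤ ENNReal.ofReal C *
          ∫⁻ z in unitDisc, ENNReal.ofReal (‖f z‖ ^ p z) ∂areaD) :
    ∀ τ ∈ unitDisc, ∃ K : Set ℂ, K ⊆ unitDisc ∧ IsCompact K ∧ τ ∈ interior K ∧
      ∃ c : ℝ, ∀ᵐ z ∂(areaD.restrict K), p z = c :=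
  modular_inequality_bergman_implies_locally_constant_exponent_general p hpm hp1 C hmod

end
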